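/- Let α ∈ (1, 2] and let X̃ = clip(X, λ) for a random vector X with E[‖X‖^α] ≤ G^α. Then ‖E[X̃] − E[X]‖² ≤ G^{2α} λ^{2−2α}. -/

import Mathlib

/-! Clipping moves `x` by at most `‖x‖`, and only when `‖x‖ > λ`; there the Markov-type estimate
`‖x‖ ≤ λ^{1-α} ‖x‖^α` holds. Integrating bounds the bias by `λ^{1-α} E‖X‖^α ≤ G^α λ^{1-α}`,
and squaring gives the claim. -/

open MeasureTheory Real

/-- Clipping operator: `clip x λ = min{1, λ/‖x‖} • x` (with `clip 0 λ = 0`). -/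
noncomputable def clip {E : Type*} [NormedAddCommGroup E] [InnerProductSpace ℝ E]
    (x : E) (lam : ℝ) : E := (min 1 (lam / ‖x‖)) • x

section Clip

variable {E : Type*} [NormedAddCommGroup E] [InnerProductSpace ℝ E] {x : E} {lam : ℝ}

lemma clip_of_norm_le (h : ‖x‖ ≤ lam) : clip x lam = x := by
  rcases eq_or_ne x 0 with rfl | hx
  · simp [clip]
  · rw [clip, min_eq_left ((one_le_div (norm_pos_iff.mpr hx)).mpr h), one_smul]

lemma norm_clip_sub_le (hlam : 0 ≤ lam) : ‖clip x lam - x‖ ≤ ‖x‖ := by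
  set c := min 1 (lam / ‖x‖)
  have hc0 : 0 ≤ c := le_min zero_le_one (by positivity)
  have hc1 : c ≤ 1 := min_le_left _ _
  calc ‖clip x lam - x‖ = ‖(c - 1) • x‖ := by rw [sub_smul, one_smul]; rfl
    _ = |c - 1| * ‖x‖ := by rw [norm_smul, norm_eq_abs]
    _ ≤ 1 * ‖x‖ := by gcongr; rw [abs_le]; constructor <;> linarith
    _ = ‖x‖ := one_mul _

lemma norm_clip_le (hlam : 0 ≤ lam) : ‖clip x lam‖ ≤ ‖x‖ := by
  rw [clip, norm_smul, norm_eq_abs, abs_of_nonneg (le_min zero_le_one (by positivity))]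
  exact mul_le_of_le_one_left (norm_nonneg x) (min_le_left _ _)

end Clip

lemma le_rpow_one_sub_mul_rpow {t lam α : ℝ} (hα : 1 ≤ α) (hlam : 0 < lam) (h : lam ≤ t) :
    t ≤ lam ^ (1 - α) * t ^ α :=
  calc t = t ^ (1 - α) * t ^ α := by
        rw [← rpow_add (hlam.trans_le h), sub_add_cancel, rpow_one]
    _ ≤ lam ^ (1 - α) * t ^ α := by
        have ht : 0 ≤ t ^ α := rpow_nonneg (hlam.le.trans h) α
        exact mul_le_mul_of_nonneg_right (rpow_le_rpow_of_nonpos hlam h (by linarith)) ht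

lemma norm_clip_sub_le_rpow {E : Type*} [NormedAddCommGroup E] [InnerProductSpace ℝ E]
    (x : E) {lam α : ℝ} (hα : 1 ≤ α) (hlam : 0 < lam) :
    ‖clip x lam - x‖ ≤ lam ^ (1 - α) * ‖x‖ ^ α := by
  rcases le_or_gt ‖x‖ lam with h | h
  · rw [clip_of_norm_le h, sub_self, norm_zero]
    positivity
  · exact (norm_clip_sub_le hlam.le).trans (le_rpow_one_sub_mul_rpow hα hlam h.le)

section Integral

variable {E Ω : Type*} [NormedAddCommGroup E] [InnerProductSpace ℝ E] [MeasurableSpace Ω]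
  {μ : Measure Ω} {X : Ω → E} {lam : ℝ}

lemma integrable_clip (hX : Integrable X μ) (hlam : 0 ≤ lam) :
    Integrable (fun ω => clip (X ω) lam) μ :=
  hX.mono
    ((aemeasurable_const.min (hX.1.norm.aemeasurable.const_div lam)).aestronglyMeasurable.smul hX.1)
    (Filter.Eventually.of_forall fun _ => norm_clip_le hlam)

lemma norm_integral_clip_sub_le {α : ℝ} (hα : 1 ≤ α) (hlam : 0 < lam) (hX : Integrable X μ)
    (hmom : Integrable (fun ω => ‖X ω‖ ^ α) μ) :
    ‖(∫ ω, clip (X ω) lam ∂μ) - ∫ ω, X ω ∂μ‖ ≤ lam ^ (1 - α) * ∫ ω, ‖X ω‖ ^ α ∂μ := by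
  have hclip := integrable_clip hX hlam.le
  calc ‖(∫ ω, clip (X ω) lam ∂μ) - ∫ ω, X ω ∂μ‖ = ‖∫ ω, (clip (X ω) lam - X ω) ∂μ‖ := by
        rw [integral_sub hclip hX]
    _ ≤ ∫ ω, ‖clip (X ω) lam - X ω‖ ∂μ := norm_integral_le_integral_norm _
    _ ≤ ∫ ω, lam ^ (1 - α) * ‖X ω‖ ^ α ∂μ :=
        integral_mono (hclip.sub hX).norm (hmom.const_mul _)
          fun ω => norm_clip_sub_le_rpow (X ω) hα hlam
    _ = lam ^ (1 - α) * ∫ ω, ‖X ω‖ ^ α ∂μ := integral_const_mul _ _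

end Integral

theorem clipping_bias_sq_le_general {d : ℕ} {Ω : Type*} [MeasurableSpace Ω]
    (μ : Measure Ω)
    (X : Ω → EuclideanSpace ℝ (Fin d)) (hXint : Integrable X μ)
    (α G lam : ℝ) (hα1 : 1 < α) (hG : 0 ≤ G) (hlam : 0 < lam)
    (hmomInt : Integrable (fun ω => ‖X ω‖ ^ α) μ)
    (hmom : ∫ ω, ‖X ω‖ ^ α ∂μ ≤ G ^ α) :
    ‖(∫ ω, clip (X ω) lam ∂μ) - ∫ ω, X ω ∂μ‖ ^ 2 ≤ G ^ (2 * α) * lam ^ (2 - 2 * α) := by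
  have hbias : ‖(∫ ω, clip (X ω) lam ∂μ) - ∫ ω, X ω ∂μ‖ ≤ lam ^ (1 - α) * G ^ α :=
    (norm_integral_clip_sub_le hα1.le hlam hXint hmomInt).trans (by gcongr)
  calc ‖(∫ ω, clip (X ω) lam ∂μ) - ∫ ω, X ω ∂μ‖ ^ 2 ≤ (lam ^ (1 - α) * G ^ α) ^ 2 := by gcongr
    _ = G ^ (2 * α) * lam ^ (2 - 2 * α) := by
        rw [mul_pow, ← rpow_mul_natCast hlam.le, ← rpow_mul_natCast hG, mul_comm]
        ring_nf

/-- Squared bias of clipping under a bounded α-moment: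
`‖E[clip(X,λ)] − E[X]‖² ≤ G^{2α} λ^{2−2α}`. -/
theorem clipping_bias_sq_le {d : ℕ} {Ω : Type*} [MeasurableSpace Ω]
    (μ : Measure Ω) [IsProbabilityMeasure μ]
    (X : Ω → EuclideanSpace ℝ (Fin d)) (hX : Measurable X) (hXint : Integrable X μ)
    (α G lam : ℝ) (hα1 : 1 < α) (hα2 : α ≤ 2) (hG : 0 ≤ G) (hlam : 0 < lam)
    (hmomInt : Integrable (fun ω => ‖X ω‖ ^ α) μ)
    (hmom : ∫ ω, ‖X ω‖ ^ α ∂μ ≤ G ^ α) :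
    ‖(∫ ω, clip (X ω) lam ∂μ) - ∫ ω, X ω ∂μ‖ ^ 2 ≤ G ^ (2 * α) * lam ^ (2 - 2 * α) :=
  clipping_bias_sq_le_general μ X hXint α G lam hα1 hG hlam hmomInt hmom
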